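/- Let G be a bipartite simple graph on a finite vertex set V = X ⊔ Y with |X| = |Y| = n, and let c₁, c₂ : E(G) → ℝ be two cost functions. Let Γ = {e' ∈ E(G) : c₁(e') ≤ c₁(r)} for an edge r, let M ⊆ Γ be a perfect matching of the subgraph with edge set Γ with r ∈ M, and suppose the subgraph with edge set Γ \ {r} has no perfect matching. Let e ∈ E(G) with e ∉ Γ, and suppose {e' ∈ E(G) : c₂(e') ≤ c₂(e)} = (Γ ∪ {e}) \ {r} and {e' ∈ E(G) : c₂(e') ≤ c₂(r)} = Γ ∪ {e}. Then exactly one of the following holds: (1) the subgraph with edge set (Γ ∪ {e}) \ {r} has a perfect matching, and then d_B(G, c₂) = c₂(e); or (2) the subgraph with edge set (Γ ∪ {e}) \ {r} has no perfect matching, and then d_B(G, c₂) = c₂(r). -/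

import Mathlib

/-! Every threshold subgraph strictly below `c f` misses `f`, so `c f` is the bottleneck cost as
soon as the threshold subgraph at `c f` has a perfect matching and every one of them uses `f`.
Apply this to `f = e` when `(Γ ∪ {e}) \ {r}` has a perfect matching (dropping `e` from it leaves
a subset of `Γ \ {r}`), and to `f = r` otherwise (`M` is a perfect matching of `Γ ∪ {e}`). -/

/-- `M` is a perfect matching (given as a set of edges): every vertex of `V`
lies in exactly one edge of `M`. -/
def IsPerfectMatchingES {V : Type} (M : Set (Sym2 V)) : Prop :=
  ∀ v : V, ∃! e, e ∈ M ∧ v ∈ e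

/-- The spanning subgraph with edge set `S` has a perfect matching. -/
def HasPerfectMatchingES {V : Type} (S : Set (Sym2 V)) : Prop :=
  ∃ M ⊆ S, IsPerfectMatchingES M

/-- The edge set of the threshold subgraph `G_λ = {e ∈ E(G) : c e ≤ λ}`. -/
def thresholdEdges {V : Type} (G : SimpleGraph V) (c : Sym2 V → ℝ) (lam : ℝ) :
    Set (Sym2 V) :=
  {e | e ∈ G.edgeSet ∧ c e ≤ lam}

theorem HasPerfectMatchingES.mono {V : Type} {S T : Set (Sym2 V)} (hST : S ⊆ T)
    (hS : HasPerfectMatchingES S) : HasPerfectMatchingES T :=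
  let ⟨M, hMS, hM⟩ := hS
  ⟨M, hMS.trans hST, hM⟩

theorem thresholdEdges_subset_diff_of_lt {V : Type} (G : SimpleGraph V) (c : Sym2 V → ℝ)
    {lam : ℝ} {f : Sym2 V} (hlt : lam < c f) :
    thresholdEdges G c lam ⊆ thresholdEdges G c (c f) \ {f} := by
  rintro g ⟨hgG, hgc⟩
  refine ⟨⟨hgG, hgc.trans hlt.le⟩, ?_⟩
  rintro rfl
  exact hgc.not_gt hlt

theorem isLeast_hasPerfectMatchingES_thresholdEdges {V : Type} (G : SimpleGraph V)
    (c : Sym2 V → ℝ) (f : Sym2 V) (hpm : HasPerfectMatchingES (thresholdEdges G c (c f)))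
    (hcrit : ¬ HasPerfectMatchingES (thresholdEdges G c (c f) \ {f})) :
    IsLeast {lam : ℝ | HasPerfectMatchingES (thresholdEdges G c lam)} (c f) := by
  refine ⟨hpm, fun lam hlam => ?_⟩
  by_contra! hlt
  exact hcrit (hlam.mono (thresholdEdges_subset_diff_of_lt G c hlt))

theorem stmt4_general {V : Type}
    (G : SimpleGraph V)
    (c₂ : Sym2 V → ℝ) (r e : Sym2 V)
    (Γ : Set (Sym2 V))
    (M : Set (Sym2 V)) (hMΓ : M ⊆ Γ) (hMpm : IsPerfectMatchingES M)
    (hnopm : ¬ HasPerfectMatchingES (Γ \ {r}))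
    (h2e : thresholdEdges G c₂ (c₂ e) = (Γ ∪ {e}) \ {r})
    (h2r : thresholdEdges G c₂ (c₂ r) = Γ ∪ {e}) :
    (HasPerfectMatchingES ((Γ ∪ {e}) \ {r}) →
      IsLeast {lam : ℝ | HasPerfectMatchingES (thresholdEdges G c₂ lam)} (c₂ e)) ∧
    (¬ HasPerfectMatchingES ((Γ ∪ {e}) \ {r}) →
      IsLeast {lam : ℝ | HasPerfectMatchingES (thresholdEdges G c₂ lam)} (c₂ r)) := by
  constructor
  · intro hpm
    refine isLeast_hasPerfectMatchingES_thresholdEdges G c₂ e (h2e ▸ hpm) fun hpm' => ?_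
    refine hnopm (hpm'.mono ?_)
    rw [h2e]
    intro g ⟨⟨hgΓe, hgr⟩, hge⟩
    exact ⟨hgΓe.resolve_right hge, hgr⟩
  · intro hnpm
    have hpm : HasPerfectMatchingES (Γ ∪ {e}) := ⟨M, hMΓ.trans Set.subset_union_left, hMpm⟩
    exact isLeast_hasPerfectMatchingES_thresholdEdges G c₂ r (h2r ▸ hpm) (h2r ▸ hnpm)

/-- U-Event lemma. Let `Γ` be the threshold edge set of `c₁` at `c₁ r`,
let `M ⊆ Γ` be a perfect matching with `r ∈ M` such that `Γ \ {r}` has no perfect matching,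
and let `e ∈ E(G)` with `e ∉ Γ`, where the new cost `c₂` satisfies: the threshold edge set
at `c₂ e` is `(Γ ∪ {e}) \ {r}` and the threshold edge set at `c₂ r` is `Γ ∪ {e}`.
Then exactly one of:
(1) `(Γ ∪ {e}) \ {r}` has a perfect matching, and then the bottleneck cost for `c₂` is `c₂ e`; or
(2) `(Γ ∪ {e}) \ {r}` has no perfect matching, and then the bottleneck cost for `c₂` is `c₂ r`. -/
theorem stmt4 {V : Type} [Fintype V] [DecidableEq V]
    (X Y : Finset V) (n : ℕ)
    (hdisj : Disjoint X Y) (hcover : X ∪ Y = Finset.univ)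
    (hXcard : X.card = n) (hYcard : Y.card = n)
    (G : SimpleGraph V)
    (hbip : ∀ u v : V, G.Adj u v → (u ∈ X ∧ v ∈ Y) ∨ (u ∈ Y ∧ v ∈ X))
    (c₁ c₂ : Sym2 V → ℝ) (r e : Sym2 V)
    (Γ : Set (Sym2 V)) (hΓ : Γ = thresholdEdges G c₁ (c₁ r))
    (M : Set (Sym2 V)) (hMΓ : M ⊆ Γ) (hMpm : IsPerfectMatchingES M) (hrM : r ∈ M)
    (hnopm : ¬ HasPerfectMatchingES (Γ \ {r}))
    (heE : e ∈ G.edgeSet) (heΓ : e ∉ Γ)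
    (h2e : thresholdEdges G c₂ (c₂ e) = (Γ ∪ {e}) \ {r})
    (h2r : thresholdEdges G c₂ (c₂ r) = Γ ∪ {e}) :
    (HasPerfectMatchingES ((Γ ∪ {e}) \ {r}) →
      IsLeast {lam : ℝ | HasPerfectMatchingES (thresholdEdges G c₂ lam)} (c₂ e)) ∧
    (¬ HasPerfectMatchingES ((Γ ∪ {e}) \ {r}) →
      IsLeast {lam : ℝ | HasPerfectMatchingES (thresholdEdges G c₂ lam)} (c₂ r)) :=
  stmt4_general G c₂ r e Γ M hMΓ hMpm hnopm h2e h2r
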